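/- arXiv:1506.07303 — 2 statements merged into one kernel-verified Lean document; each statement's English description precedes it below -/
import Mathlib

section
/- For every ordering ξ of the Pascal graph, every α ∈ (0,1), and every n ≥ 1, the μ_α-measure of the set of paths whose first n edges are all ξ-minimal is at most (n+1)·max(α,1−α)^n. -/
/-- Vertex reached after `n` moves: (number of `false` moves, number of `true` moves). -/
def vertexAt (γ : ℕ → Bool) (n : ℕ) : ℕ × ℕ :=
  (((Finset.range n).filter fun i => γ i = false).card,
   ((Finset.range n).filter fun i => γ i = true).card)

def childOf (v : ℕ × ℕ) (m : Bool) : ℕ × ℕ :=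
  if m then (v.1, v.2 + 1) else (v.1 + 1, v.2)

def MoveMin (ξ : ℕ × ℕ → Bool) (v : ℕ × ℕ) (m : Bool) : Prop :=
  (childOf v m).1 = 0 ∨ (childOf v m).2 = 0 ∨ m = !ξ (childOf v m)

def MoveMax (ξ : ℕ × ℕ → Bool) (v : ℕ × ℕ) (m : Bool) : Prop :=
  (childOf v m).1 = 0 ∨ (childOf v m).2 = 0 ∨ m = ξ (childOf v m)

def IsMinEdge (ξ : ℕ × ℕ → Bool) (γ : ℕ → Bool) (i : ℕ) : Prop :=
  MoveMin ξ (vertexAt γ i) (γ i)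

def IsMaxEdge (ξ : ℕ × ℕ → Bool) (γ : ℕ → Bool) (i : ℕ) : Prop :=
  MoveMax ξ (vertexAt γ i) (γ i)

def XMin (ξ : ℕ × ℕ → Bool) : Set (ℕ → Bool) := {γ | ∀ i, IsMinEdge ξ γ i}

def XMax (ξ : ℕ × ℕ → Bool) : Set (ℕ → Bool) := {γ | ∀ i, IsMaxEdge ξ γ i}

def XPrime (ξ : ℕ × ℕ → Bool) : Set (ℕ → Bool) :=
  {γ | ∃ δ ∈ XMin ξ ∪ XMax ξ, ∃ N : ℕ, ∀ n, N ≤ n → γ n = δ n}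

/-- The all-ξ-minimal finite path (list of moves) from the root to a vertex. -/
def minPath (ξ : ℕ × ℕ → Bool) : ℕ × ℕ → List Bool
  | (0, 0) => []
  | (x + 1, 0) => minPath ξ (x, 0) ++ [false]
  | (0, y + 1) => minPath ξ (0, y) ++ [true]
  | (x + 1, y + 1) =>
      if ξ (x + 1, y + 1) then minPath ξ (x, y + 1) ++ [false]
      else minPath ξ (x + 1, y) ++ [true]
  termination_by p => p.1 + p.2

/-- The all-ξ-maximal finite path (list of moves) from the root to a vertex. -/
def maxPath (ξ : ℕ × ℕ → Bool) : ℕ × ℕ → List Bool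
  | (0, 0) => []
  | (x + 1, 0) => maxPath ξ (x, 0) ++ [false]
  | (0, y + 1) => maxPath ξ (0, y) ++ [true]
  | (x + 1, y + 1) =>
      if ξ (x + 1, y + 1) then maxPath ξ (x + 1, y) ++ [true]
      else maxPath ξ (x, y + 1) ++ [false]
  termination_by p => p.1 + p.2

open Classical in
/-- The adic (Vershik) transformation determined by ξ (identity where undefined). -/
noncomputable def adicT (ξ : ℕ × ℕ → Bool) (γ : ℕ → Bool) : ℕ → Bool :=
  if h : ∃ i, ¬ IsMaxEdge ξ γ i then
    let i0 := Nat.find h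
    let v := vertexAt γ (i0 + 1)
    let src : ℕ × ℕ := if ξ v then (v.1, v.2 - 1) else (v.1 - 1, v.2)
    fun n =>
      if n < i0 then (minPath ξ src).getD n false
      else if n = i0 then ξ v
      else γ n
  else γ

open Classical in
/-- The inverse adic transformation determined by ξ (identity where undefined). -/
noncomputable def adicTInv (ξ : ℕ × ℕ → Bool) (γ : ℕ → Bool) : ℕ → Bool :=
  if h : ∃ i, ¬ IsMinEdge ξ γ i then
    let i0 := Nat.find h
    let v := vertexAt γ (i0 + 1)
    let src : ℕ × ℕ := if ξ v then (v.1 - 1, v.2) else (v.1, v.2 - 1)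
    fun n =>
      if n < i0 then (maxPath ξ src).getD n false
      else if n = i0 then !ξ v
      else γ n
  else γ

/-- ℤ-iterates of the adic transformation. -/
noncomputable def adicIter (ξ : ℕ × ℕ → Bool) : ℤ → (ℕ → Bool) → (ℕ → Bool)
  | Int.ofNat n, γ => (adicT ξ)^[n] γ
  | Int.negSucc n, γ => (adicTInv ξ)^[n + 1] γ

/-- The k-coding of the orbit of γ: symbols are the initial segments of length k. -/
noncomputable def omegaCode (ξ : ℕ × ℕ → Bool) (k : ℕ) (γ : ℕ → Bool) : ℤ → List Bool :=
  fun t => (List.range k).map (adicIter ξ t γ)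

/-- Ordered list of all initial segments from the root to (x,y), in increasing ξ-order. -/
def segList (ξ : ℕ × ℕ → Bool) : ℕ × ℕ → List (List Bool)
  | (0, 0) => [[]]
  | (x + 1, 0) => (segList ξ (x, 0)).map (· ++ [false])
  | (0, y + 1) => (segList ξ (0, y)).map (· ++ [true])
  | (x + 1, y + 1) =>
      if ξ (x + 1, y + 1) then
        (segList ξ (x, y + 1)).map (· ++ [false]) ++ (segList ξ (x + 1, y)).map (· ++ [true])
      else
        (segList ξ (x + 1, y)).map (· ++ [true]) ++ (segList ξ (x, y + 1)).map (· ++ [false])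
  termination_by p => p.1 + p.2

/-- Level-k coded basic block at a vertex (x,y) with x+y ≥ k, a word over the
alphabet of initial segments of length k. -/
def codedBlock (ξ : ℕ × ℕ → Bool) (k : ℕ) : ℕ × ℕ → List (List Bool)
  | (0, 0) => segList ξ (0, 0)
  | (x + 1, 0) => if x + 1 ≤ k then segList ξ (x + 1, 0) else [List.replicate k false]
  | (0, y + 1) => if y + 1 ≤ k then segList ξ (0, y + 1) else [List.replicate k true]
  | (x + 1, y + 1) =>
      if x + 1 + (y + 1) ≤ k then segList ξ (x + 1, y + 1)
      else if ξ (x + 1, y + 1) then codedBlock ξ k (x, y + 1) ++ codedBlock ξ k (x + 1, y)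
      else codedBlock ξ k (x + 1, y) ++ codedBlock ξ k (x, y + 1)
  termination_by p => p.1 + p.2

/-- Basic block over the alphabet {a,b}, with a = `false` and b = `true`. -/
def basicBlock (ξ : ℕ × ℕ → Bool) : ℕ × ℕ → List Bool
  | (0, 0) => []
  | (_ + 1, 0) => [false]
  | (0, _ + 1) => [true]
  | (x + 1, y + 1) =>
      if ξ (x + 1, y + 1) then basicBlock ξ (x, y + 1) ++ basicBlock ξ (x + 1, y)
      else basicBlock ξ (x + 1, y) ++ basicBlock ξ (x, y + 1)
  termination_by p => p.1 + p.2

/-- The finite word ω_s ω_{s+1} ... ω_{t-1}. -/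
def wordAt (ω : ℤ → List Bool) (s t : ℤ) : List (List Bool) :=
  (List.range (t - s).toNat).map fun u => ω (s + u)

/-- A ξ-consistent factoring scheme for ω ∈ 𝒫_k^ℤ: `cuts j` is the set of starting
positions of the blocks of the level-(k+j) factorization, and `vert j s` is the
vertex whose coded basic block is the block starting at the cut `s`. -/
def IsConsistentScheme (ξ : ℕ × ℕ → Bool) (k : ℕ) (ω : ℤ → List Bool)
    (cuts : ℕ → Set ℤ) (vert : ℕ → ℤ → ℕ × ℕ) : Prop :=
  (∀ j : ℕ, ∀ M : ℤ, ∃ s ∈ cuts j, s < M) ∧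
  (∀ j : ℕ, ∀ M : ℤ, ∃ t ∈ cuts j, M < t) ∧
  (∀ j : ℕ, ∀ s ∈ cuts j, ∀ t ∈ cuts j, s < t → (∀ u ∈ cuts j, ¬(s < u ∧ u < t)) →
      (vert j s).1 + (vert j s).2 = k + j ∧
      wordAt ω s t = codedBlock ξ k (vert j s)) ∧
  (∀ j : ℕ, cuts (j + 1) ⊆ cuts j) ∧
  (∀ j : ℕ, ∀ s ∈ cuts (j + 1), ∀ t ∈ cuts (j + 1), s < t →
      (∀ u ∈ cuts (j + 1), ¬(s < u ∧ u < t)) →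
      ∀ x y : ℕ, vert (j + 1) s = (x + 1, y + 1) →
        ∃ m ∈ cuts j, s < m ∧ m < t ∧ (∀ u ∈ cuts j, s < u → u < t → u = m) ∧
          (if ξ (x + 1, y + 1)
            then vert j s = (x, y + 1) ∧ vert j m = (x + 1, y)
            else vert j s = (x + 1, y) ∧ vert j m = (x, y + 1)))

/-- The natural factoring scheme of the k-coding of γ: a level-(k+j) block begins at
coordinate t exactly when T^t γ begins with an all-ξ-minimal path to its level-(k+j) vertex. -/
noncomputable def natCuts (ξ : ℕ × ℕ → Bool) (k : ℕ) (γ : ℕ → Bool) : ℕ → Set ℤ :=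
  fun j => {t | ∀ i < k + j, IsMinEdge ξ (adicIter ξ t γ) i}

noncomputable def natVert (ξ : ℕ × ℕ → Bool) (k : ℕ) (γ : ℕ → Bool) : ℕ → ℤ → ℕ × ℕ :=
  fun j t => vertexAt (adicIter ξ t γ) (k + j)

open Classical in
/-- The return time r_n of the Kink Lemma, where `g` is the move of γ leaving (i,j). -/
noncomputable def kinkReturn (ξ : ℕ × ℕ → Bool) (i j : ℕ) (g : Bool) : ℕ :=
  let n := i + j
  if MoveMax ξ (i, j) g ∧ MoveMin ξ (i, j) (!g) then n.choose j
  else if (MoveMin ξ (i, j) g ∧ MoveMin ξ (i, j) (!g) ∧ g = true) ∨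
          (MoveMax ξ (i, j) g ∧ MoveMax ξ (i, j) (!g) ∧ g = false) then (n + 1).choose (j + 1)
  else if (MoveMin ξ (i, j) g ∧ MoveMin ξ (i, j) (!g) ∧ g = false) ∨
          (MoveMax ξ (i, j) g ∧ MoveMax ξ (i, j) (!g) ∧ g = true) then (n + 1).choose j
  else (n + 1).choose j + n.choose (j + 1)

/-- Convert a length-k list of moves to a function `Fin k → Bool`. -/
def segFn (k : ℕ) (w : List Bool) : Fin k → Bool := fun idx => w.getD idx false

/-- The subshift Σ_k of the k-codings: sequences all of whose finite subblocks occur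
in some level-k coded basic block. -/
def SigmaK (ξ : ℕ × ℕ → Bool) (k : ℕ) : Set (ℤ → (Fin k → Bool)) :=
  {ω | ∀ (s : ℤ) (l : ℕ), ∃ p : ℕ × ℕ,
    ((List.range l).map fun u => ω (s + u)) <:+: (codedBlock ξ k p).map (segFn k)}

/-- The subshift Σ_ξ ⊆ {a,b}^ℤ of sequences all of whose finite subblocks occur in
some basic block B_ξ(x,y). -/
def SigmaXi (ξ : ℕ × ℕ → Bool) : Set (ℤ → Bool) :=
  {ω | ∀ (s : ℤ) (l : ℕ), ∃ p : ℕ × ℕ,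
    ((List.range l).map fun u => ω (s + u)) <:+: basicBlock ξ p}

/-- The big subshift Σ: sequences all of whose finite subblocks occur in some basic
block B_ξ(x,y) for some ordering ξ. -/
def BigShift : Set (ℤ → Bool) :=
  {ω | ∀ (s : ℤ) (l : ℕ), ∃ (ξ : ℕ × ℕ → Bool) (p : ℕ × ℕ),
    ((List.range l).map fun u => ω (s + u)) <:+: basicBlock ξ p}


lemma vertexAt_succ (γ : ℕ → Bool) (n : ℕ) :
    vertexAt γ (n+1) = childOf (vertexAt γ n) (γ n) := by
  unfold vertexAt childOf
  cases h : γ n <;>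
    simp [Finset.range_add_one, Finset.filter_insert, h,
      Finset.card_insert_of_notMem, Finset.notMem_range_self]

lemma vertexAt_sum (γ : ℕ → Bool) (n : ℕ) :
    (vertexAt γ n).1 + (vertexAt γ n).2 = n := by
  induction n with
  | zero => simp [vertexAt]
  | succ n ih =>
    rw [vertexAt_succ]
    cases h : γ n <;> simp [childOf] <;> omega

lemma move_eq (ξ : ℕ × ℕ → Bool) {u u' : ℕ × ℕ} {m m' : Bool}
    (hm : MoveMin ξ u m) (hm' : MoveMin ξ u' m')
    (h : childOf u m = childOf u' m') : m = m' ∧ u = u' := by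
  rcases u with ⟨a,b⟩; rcases u' with ⟨c,d⟩
  cases m <;> cases m' <;>
    simp_all [childOf, MoveMin, Prod.ext_iff] <;> omega

lemma min_unique (ξ : ℕ × ℕ → Bool) (γ δ : ℕ → Bool) :
    ∀ n, (∀ i < n, IsMinEdge ξ γ i) → (∀ i < n, IsMinEdge ξ δ i) →
      vertexAt γ n = vertexAt δ n → ∀ i < n, γ i = δ i := by
  intro n
  induction n with
  | zero => intro _ _ _ i hi; omega
  | succ n ih =>
    intro hγ hδ hv i hi
    have h1 : childOf (vertexAt γ n) (γ n) = childOf (vertexAt δ n) (δ n) := by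
      rw [← vertexAt_succ, ← vertexAt_succ, hv]
    have h2 := move_eq ξ (hγ n (Nat.lt_succ_self n)) (hδ n (Nat.lt_succ_self n)) h1
    rcases Nat.lt_succ_iff_lt_or_eq.mp hi with h | h
    · exact ih (fun j hj => hγ j (by omega)) (fun j hj => hδ j (by omega)) h2.2 i h
    · subst h; exact h2.1

open MeasureTheory in
theorem stmt1 (ξ : ℕ × ℕ → Bool) (α : ℝ) (hα0 : 0 < α) (hα1 : α < 1)
    (μ : Measure (ℕ → Bool))
    (hμ : ∀ (n : ℕ) (f : ℕ → Bool),
      μ {γ | ∀ i < n, γ i = f i} =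
        ∏ i ∈ Finset.range n, ENNReal.ofReal (if f i then α else 1 - α))
    (n : ℕ) (hn : 1 ≤ n) :
    μ {γ | ∀ i < n, IsMinEdge ξ γ i} ≤
      ((n : ENNReal) + 1) * ENNReal.ofReal (max α (1 - α)) ^ n := by
  classical
  set M := ENNReal.ofReal (max α (1 - α)) with hM
  set A : Set (ℕ → Bool) := {γ | ∀ i < n, IsMinEdge ξ γ i} with hA
  have hpiece : ∀ x ∈ Finset.range (n+1),
      μ (A ∩ {γ | (vertexAt γ n).1 = x}) ≤ M ^ n := by
    intro x _
    by_cases hne : (A ∩ {γ | (vertexAt γ n).1 = x}).Nonempty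
    · obtain ⟨δ, hδA, hδx⟩ := hne
      have hsub : A ∩ {γ | (vertexAt γ n).1 = x} ⊆ {γ | ∀ i < n, γ i = δ i} := by
        rintro γ ⟨hγA, hγx⟩ i hi
        have hv : vertexAt γ n = vertexAt δ n := by
          have s1 := vertexAt_sum γ n
          have s2 := vertexAt_sum δ n
          have e1 : (vertexAt γ n).1 = (vertexAt δ n).1 := by
            rw [Set.mem_setOf_eq.mp hγx, Set.mem_setOf_eq.mp hδx]
          exact Prod.ext e1 (by omega)
        exact min_unique ξ γ δ n hγA hδA hv i hi
      calc μ (A ∩ {γ | (vertexAt γ n).1 = x}) ≤ μ {γ | ∀ i < n, γ i = δ i} :=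
            measure_mono hsub
        _ = ∏ i ∈ Finset.range n, ENNReal.ofReal (if δ i then α else 1 - α) := hμ n δ
        _ ≤ ∏ _i ∈ Finset.range n, M := by
            refine Finset.prod_le_prod' fun i _ => ?_
            apply ENNReal.ofReal_le_ofReal
            split
            · exact le_max_left _ _
            · exact le_max_right _ _
        _ = M ^ n := by simp
    · rw [Set.not_nonempty_iff_eq_empty.mp hne]; simp
  have hcover : A ⊆ ⋃ x ∈ Finset.range (n+1), (A ∩ {γ | (vertexAt γ n).1 = x}) := by
    intro γ hγ
    refine Set.mem_biUnion (Finset.mem_range.mpr ?_) ⟨hγ, rfl⟩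
    have := vertexAt_sum γ n; omega
  calc μ A ≤ μ (⋃ x ∈ Finset.range (n+1), (A ∩ {γ | (vertexAt γ n).1 = x})) :=
        measure_mono hcover
    _ ≤ ∑ x ∈ Finset.range (n+1), μ (A ∩ {γ | (vertexAt γ n).1 = x}) :=
        measure_biUnion_finset_le _ _
    _ ≤ ∑ _x ∈ Finset.range (n+1), M ^ n := Finset.sum_le_sum hpiece
    _ = ((n : ENNReal) + 1) * M ^ n := by
        simp [Finset.sum_const, nsmul_eq_mul]
end

section
/- For all x,y ≥ 1, the number of distinct words B_ξ(x,y), as ξ ranges over all orderings of the Pascal graph with ξ(i,1)=ξ(1,j)=0 for all i,j ≥ 1, is exactly 2^{(x−1)(y−1)}. -/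
/-! Under the normalization `B(p, 1) = aᵖb`, and by induction `B(p, q)` contains `aᵖ`
(for `q ≥ 1`) but never `aᵖ⁺¹`: for `q ≥ 2` a block is the concatenation of two smaller
ones, the first ending in `b`. Transposing the Pascal graph swaps `a` and `b` and reverses
blocks, so the same holds for `b`-runs with `p` and `q` exchanged. If two normalized
orderings differ at `(x, y)` with `x, y ≥ 2`, say `B(x, y-1) B(x-1, y) = B'(x-1, y) B'(x, y-1)`,
then, since blocks at a vertex all have the same length, either `B(x, y-1) ∋ aˣ` is a prefix
of `B'(x-1, y)`, or `B(x-1, y) ∋ bʸ` is a suffix of `B'(x, y-1)`; both are impossible.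
So `B_ξ(x, y)` determines `ξ` on `[2, x] × [2, y]`, and it depends on nothing else. -/

theorem List.replicate_infix_append {α : Type*} {k : ℕ} {c d : α} {u v : List α}
    (hu : u.getLast? = some d) (hdc : d ≠ c) (h : List.replicate k c <:+: u ++ v) :
    List.replicate k c <:+: u ∨ List.replicate k c <:+: v := by
  rcases List.infix_append_iff_ne_nil.mp h with h | h | ⟨l₁, l₂, hl₁, -, hl, hsuf, -⟩
  · exact .inl h
  · exact .inr h
  · refine absurd (List.eq_of_mem_replicate (hl ▸ List.mem_append_left l₂ ?_)) hdc
    rw [List.getLast?_eq_some_getLast (hsuf.ne_nil hl₁), ← hsuf.getLast hl₁] at hu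
    exact Option.some_injective _ hu ▸ List.getLast_mem hl₁

section BasicBlock

variable {ξ η : ℕ × ℕ → Bool}

theorem basicBlock_zero_zero : basicBlock ξ (0, 0) = [] := by rw [basicBlock]

theorem basicBlock_succ_zero (x : ℕ) : basicBlock ξ (x + 1, 0) = [false] := by rw [basicBlock]

theorem basicBlock_zero_succ (y : ℕ) : basicBlock ξ (0, y + 1) = [true] := by rw [basicBlock]

theorem basicBlock_succ_succ (x y : ℕ) : basicBlock ξ (x + 1, y + 1) =
    if ξ (x + 1, y + 1) then basicBlock ξ (x, y + 1) ++ basicBlock ξ (x + 1, y)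
    else basicBlock ξ (x + 1, y) ++ basicBlock ξ (x, y + 1) := by
  rw [basicBlock]

theorem length_basicBlock_eq (ξ η : ℕ × ℕ → Bool) :
    ∀ x y, (basicBlock ξ (x, y)).length = (basicBlock η (x, y)).length
  | 0, 0 => by simp only [basicBlock_zero_zero]
  | x + 1, 0 => by simp only [basicBlock_succ_zero]
  | 0, y + 1 => by simp only [basicBlock_zero_succ]
  | x + 1, y + 1 => by
    have h₁ := length_basicBlock_eq ξ η x (y + 1)
    have h₂ := length_basicBlock_eq ξ η (x + 1) y
    simp only [basicBlock_succ_succ]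
    split <;> split <;> simp only [List.length_append] <;> omega

theorem basicBlock_congr :
    ∀ {x y}, (∀ i j, 1 ≤ i → i ≤ x → 1 ≤ j → j ≤ y → ξ (i, j) = η (i, j)) →
      basicBlock ξ (x, y) = basicBlock η (x, y)
  | 0, 0, _ => by simp only [basicBlock_zero_zero]
  | _ + 1, 0, _ => by simp only [basicBlock_succ_zero]
  | 0, _ + 1, _ => by simp only [basicBlock_zero_succ]
  | x + 1, y + 1, h => by
    rw [basicBlock_succ_succ, basicBlock_succ_succ, h (x + 1) (y + 1) le_add_self le_rfl
        le_add_self le_rfl,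
      basicBlock_congr fun i j hi hix hj hjy => h i j hi (by omega) hj hjy,
      basicBlock_congr fun i j hi hix hj hjy => h i j hi hix hj (by omega)]

theorem basicBlock_swap (ξ : ℕ × ℕ → Bool) :
    ∀ x y, basicBlock (ξ ∘ Prod.swap) (y, x) = ((basicBlock ξ (x, y)).map not).reverse
  | 0, 0 => by simp only [basicBlock_zero_zero, List.map_nil, List.reverse_nil]
  | x + 1, 0 => by simp [basicBlock_zero_succ, basicBlock_succ_zero]
  | 0, y + 1 => by simp [basicBlock_zero_succ, basicBlock_succ_zero]
  | x + 1, y + 1 => by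
    rw [basicBlock_succ_succ, basicBlock_succ_succ, basicBlock_swap ξ x (y + 1),
      basicBlock_swap ξ (x + 1) y]
    simp only [Function.comp_apply, Prod.swap_prod_mk]
    split <;> simp

def IsNormalized (ξ : ℕ × ℕ → Bool) : Prop :=
  (∀ i, 1 ≤ i → ξ (i, 1) = false) ∧ ∀ j, 1 ≤ j → ξ (1, j) = false

theorem IsNormalized.swap (hξ : IsNormalized ξ) : IsNormalized (ξ ∘ Prod.swap) :=
  ⟨hξ.2, hξ.1⟩

theorem basicBlock_one (hrow : ∀ i, 1 ≤ i → ξ (i, 1) = false) :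
    ∀ p, basicBlock ξ (p, 1) = List.replicate p false ++ [true]
  | 0 => basicBlock_zero_succ 0
  | p + 1 => by
    rw [basicBlock_succ_succ, hrow (p + 1) le_add_self, basicBlock_succ_zero,
      basicBlock_one hrow p]
    simp [List.replicate_succ]

theorem getLast?_basicBlock (hrow : ∀ i, 1 ≤ i → ξ (i, 1) = false) :
    ∀ {p q}, 1 ≤ q → (basicBlock ξ (p, q)).getLast? = some true
  | 0, q + 1, _ => by rw [basicBlock_zero_succ]; rfl
  | p + 1, 1, _ => by rw [basicBlock_one hrow]; simp
  | p + 1, q + 2, _ => by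
    rw [basicBlock_succ_succ]
    split <;> simp [List.getLast?_append, getLast?_basicBlock hrow (p := p + 1) (q := q + 1),
      getLast?_basicBlock hrow (p := p) (q := q + 2)]

theorem replicate_infix_basicBlock (hrow : ∀ i, 1 ≤ i → ξ (i, 1) = false) :
    ∀ p {q}, 1 ≤ q → List.replicate p false <:+: basicBlock ξ (p, q)
  | 0, _, _ => List.nil_infix
  | p + 1, 1, _ => by rw [basicBlock_one hrow]; exact List.infix_append_left
  | p + 1, q + 2, _ => by
    have h := replicate_infix_basicBlock hrow (p + 1) (q := q + 1) le_add_self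
    rw [basicBlock_succ_succ]
    split
    · exact h.trans List.infix_append_right
    · exact h.trans List.infix_append_left

theorem not_replicate_infix_basicBlock (hrow : ∀ i, 1 ≤ i → ξ (i, 1) = false) :
    ∀ p q, ¬ List.replicate (p + 1) false <:+: basicBlock ξ (p, q)
  | 0, 0 => by simp [basicBlock_zero_zero]
  | p + 1, 0 => by
    rw [basicBlock_succ_zero]
    exact fun h => by simpa using h.length_le
  | 0, q + 1 => by simp [basicBlock_zero_succ]
  | p + 1, 1 => by
    rw [basicBlock_one hrow]
    exact fun h => by simpa using h.count_le false
  | p + 1, q + 2 => by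
    have hshort : List.replicate (p + 1) false <:+: List.replicate (p + 2) false :=
      List.infix_replicate_iff.mpr ⟨by simp, by simp⟩
    rw [basicBlock_succ_succ]
    intro h
    split at h
    · rcases List.replicate_infix_append (getLast?_basicBlock hrow (p := p) le_add_self)
        (by decide) h with h | h
      · exact not_replicate_infix_basicBlock hrow p (q + 2) (hshort.trans h)
      · exact not_replicate_infix_basicBlock hrow (p + 1) (q + 1) h
    · rcases List.replicate_infix_append (getLast?_basicBlock hrow (p := p + 1) le_add_self)
        (by decide) h with h | h
      · exact not_replicate_infix_basicBlock hrow (p + 1) (q + 1) h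
      · exact not_replicate_infix_basicBlock hrow p (q + 2) (hshort.trans h)

theorem basicBlock_ne_of_length_le (hξ : ∀ i, 1 ≤ i → ξ (i, 1) = false)
    (hη : ∀ i, 1 ≤ i → η (i, 1) = false) {x y : ℕ} (hy : 1 ≤ y)
    (hξxy : ξ (x + 1, y + 1) = false) (hηxy : η (x + 1, y + 1) = true)
    (hle : (basicBlock ξ (x + 1, y)).length ≤ (basicBlock ξ (x, y + 1)).length) :
    basicBlock ξ (x + 1, y + 1) ≠ basicBlock η (x + 1, y + 1) := by
  intro h
  rw [basicBlock_succ_succ, basicBlock_succ_succ, hξxy, hηxy, if_neg (by decide), if_pos rfl] at h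
  have hpre : basicBlock ξ (x + 1, y) <+: basicBlock η (x, y + 1) :=
    List.prefix_of_prefix_length_le (h ▸ List.prefix_append _ _) (List.prefix_append _ _)
      (hle.trans (length_basicBlock_eq ξ η x (y + 1)).le)
  exact not_replicate_infix_basicBlock hη x (y + 1)
    ((replicate_infix_basicBlock hξ (x + 1) hy).trans hpre.isInfix)

theorem basicBlock_ne_of_false_of_true (hξ : IsNormalized ξ) (hη : IsNormalized η) {x y : ℕ}
    (hx : 1 ≤ x) (hy : 1 ≤ y) (hξxy : ξ (x + 1, y + 1) = false)
    (hηxy : η (x + 1, y + 1) = true) :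
    basicBlock ξ (x + 1, y + 1) ≠ basicBlock η (x + 1, y + 1) := by
  rcases le_total (basicBlock ξ (x + 1, y)).length (basicBlock ξ (x, y + 1)).length with hle | hle
  · exact basicBlock_ne_of_length_le hξ.1 hη.1 hy hξxy hηxy hle
  -- the other case is the first one for the transposed orderings
  · have hswap := basicBlock_ne_of_length_le hξ.swap.1 hη.swap.1 hx hξxy hηxy
      (by simpa only [basicBlock_swap, List.length_reverse, List.length_map] using hle)
    rw [basicBlock_swap, basicBlock_swap] at hswap
    exact fun h => hswap (by rw [h])

theorem apply_eq_of_basicBlock_eq (hξ : IsNormalized ξ) (hη : IsNormalized η) {x y : ℕ}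
    (hx : 1 ≤ x) (hy : 1 ≤ y)
    (h : basicBlock ξ (x + 1, y + 1) = basicBlock η (x + 1, y + 1)) :
    ξ (x + 1, y + 1) = η (x + 1, y + 1) := by
  cases hξxy : ξ (x + 1, y + 1) <;> cases hηxy : η (x + 1, y + 1)
  · rfl
  · exact absurd h (basicBlock_ne_of_false_of_true hξ hη hx hy hξxy hηxy)
  · exact absurd h.symm (basicBlock_ne_of_false_of_true hη hξ hx hy hηxy hξxy)
  · rfl

theorem basicBlock_eq_of_basicBlock_succ_succ_eq {x y : ℕ}
    (hxy : ξ (x + 1, y + 1) = η (x + 1, y + 1))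
    (h : basicBlock ξ (x + 1, y + 1) = basicBlock η (x + 1, y + 1)) :
    basicBlock ξ (x, y + 1) = basicBlock η (x, y + 1) ∧
      basicBlock ξ (x + 1, y) = basicBlock η (x + 1, y) := by
  rw [basicBlock_succ_succ, basicBlock_succ_succ, hxy] at h
  split at h
  · exact List.append_inj h (length_basicBlock_eq ξ η _ _)
  · exact (List.append_inj h (length_basicBlock_eq ξ η _ _)).symm

def innerBox (x y : ℕ) : Finset (ℕ × ℕ) := Finset.Icc 2 x ×ˢ Finset.Icc 2 y

theorem eqOn_innerBox_of_basicBlock_eq (hξ : IsNormalized ξ) (hη : IsNormalized η) :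
    ∀ {x y}, basicBlock ξ (x, y) = basicBlock η (x, y) → Set.EqOn ξ η (innerBox x y)
  | x + 2, y + 2, h, (i, j), hij => by
    simp only [innerBox, Finset.coe_product, Finset.coe_Icc, Set.mem_prod, Set.mem_Icc] at hij
    have hxy := apply_eq_of_basicBlock_eq hξ hη le_add_self le_add_self h
    obtain ⟨hleft, hdown⟩ := basicBlock_eq_of_basicBlock_succ_succ_eq hxy h
    rcases Nat.lt_or_ge j (y + 2) with hj | hj
    · exact eqOn_innerBox_of_basicBlock_eq hξ hη hdown (by simp [innerBox]; omega)
    rcases Nat.lt_or_ge i (x + 2) with hi | hi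
    · exact eqOn_innerBox_of_basicBlock_eq hξ hη hleft (by simp [innerBox]; omega)
    obtain rfl : i = x + 2 := by omega
    obtain rfl : j = y + 2 := by omega
    exact hxy
  | 0, _, _, _, hp | 1, _, _, _, hp | _, 0, _, _, hp | _, 1, _, _, hp => by
    simp [innerBox] at hp

end BasicBlock

def orderingOf (s : Finset (ℕ × ℕ)) : ℕ × ℕ → Bool := fun p => decide (p ∈ s)

theorem isNormalized_orderingOf {x y : ℕ} {s : Finset (ℕ × ℕ)} (hs : s ⊆ innerBox x y) :
    IsNormalized (orderingOf s) := by
  constructor <;> intro i _ <;> simp only [orderingOf, decide_eq_false_iff_not] <;> intro hi <;>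
    simpa [innerBox] using hs hi

theorem basicBlock_orderingOf_filter {ξ : ℕ × ℕ → Bool} (hξ : IsNormalized ξ) (x y : ℕ) :
    basicBlock (orderingOf ((innerBox x y).filter fun p => ξ p)) (x, y) = basicBlock ξ (x, y) :=
  basicBlock_congr fun i j hi hix hj hjy => by
    rcases Nat.lt_or_ge i 2 with hi2 | hi2
    · obtain rfl : i = 1 := by omega
      simp [orderingOf, innerBox, hξ.2 j hj]
    rcases Nat.lt_or_ge j 2 with hj2 | hj2
    · obtain rfl : j = 1 := by omega
      simp [orderingOf, innerBox, hξ.1 i hi]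
    · simp [orderingOf, innerBox, hi2, hix, hj2, hjy]

theorem injOn_basicBlock_orderingOf (x y : ℕ) :
    Set.InjOn (fun s => basicBlock (orderingOf s) (x, y)) ((innerBox x y).powerset : Set _) := by
  intro s hs t ht h
  simp only [Finset.coe_powerset, Set.mem_preimage, Set.mem_powerset_iff, Finset.coe_subset]
    at hs ht
  ext p
  by_cases hp : p ∈ innerBox x y
  · simpa [orderingOf] using
      eqOn_innerBox_of_basicBlock_eq (isNormalized_orderingOf hs) (isNormalized_orderingOf ht) h hp
  · exact iff_of_false (fun h' => hp (hs h')) (fun h' => hp (ht h'))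

theorem stmt11_general (x y : ℕ) :
    Set.ncard {w : List Bool | ∃ ξ : ℕ × ℕ → Bool,
        (∀ i, 1 ≤ i → ξ (i, 1) = false) ∧ (∀ j, 1 ≤ j → ξ (1, j) = false) ∧
        w = basicBlock ξ (x, y)} = 2 ^ ((x - 1) * (y - 1)) := by
  have hwords : {w : List Bool | ∃ ξ : ℕ × ℕ → Bool,
      (∀ i, 1 ≤ i → ξ (i, 1) = false) ∧ (∀ j, 1 ≤ j → ξ (1, j) = false) ∧
      w = basicBlock ξ (x, y)} =
      ((innerBox x y).powerset.image fun s => basicBlock (orderingOf s) (x, y) :) := by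
    ext w
    simp only [Set.mem_ofPred_eq, Finset.coe_image, Set.mem_image, Finset.mem_coe,
      Finset.mem_powerset]
    constructor
    · rintro ⟨ξ, h₁, h₂, rfl⟩
      exact ⟨_, Finset.filter_subset _ _, basicBlock_orderingOf_filter ⟨h₁, h₂⟩ x y⟩
    · rintro ⟨s, hs, rfl⟩
      exact ⟨_, (isNormalized_orderingOf hs).1, (isNormalized_orderingOf hs).2, rfl⟩
  rw [hwords, Set.ncard_coe_finset, Finset.card_image_of_injOn (injOn_basicBlock_orderingOf x y),
    Finset.card_powerset, innerBox, Finset.card_product, Nat.card_Icc, Nat.card_Icc,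
    Nat.add_sub_add_right, Nat.add_sub_add_right]

theorem stmt11 (x y : ℕ) (hx : 1 ≤ x) (hy : 1 ≤ y) :
    Set.ncard {w : List Bool | ∃ ξ : ℕ × ℕ → Bool,
        (∀ i, 1 ≤ i → ξ (i, 1) = false) ∧ (∀ j, 1 ≤ j → ξ (1, j) = false) ∧
        w = basicBlock ξ (x, y)} = 2 ^ ((x - 1) * (y - 1)) :=
  stmt11_general x y
end
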